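/- For every perturbation P = ⊕Z₁⊕⋯⊕Z_k and every graph G: a graph H belongs to P(G) if and only if there exists a partition (V_x)_{x∈𝔽₂^k} of V(G) (with possibly empty parts) such that H is obtained from G by flipping exactly the adjacencies of those pairs {u,v} of distinct vertices with u ∈ V_x, v ∈ V_y and ⟨x,y⟩ = 1, where ⟨x,y⟩ denotes the inner product over 𝔽₂. -/

import Mathlib

open SimpleGraph

/-! ### Finite graphs and colored graphs -/

/-- A finite simple graph. -/
structure FGraph : Type 1 where
  V : Type
  [fin : Finite V]
  G : SimpleGraph V

attribute [instance] FGraph.fin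

/-- A finite simple graph colored by `c` unary predicates. -/
structure CGraph (c : ℕ) : Type 1 where
  V : Type
  [fin : Finite V]
  G : SimpleGraph V
  color : Fin c → Set V

attribute [instance] CGraph.fin

/-! ### First-order formulas over `c`-colored graphs -/

/-- First-order formulas in the language of graphs with `c` unary predicates,
with free variables among `Fin m`. -/
inductive Fml (c : ℕ) : ℕ → Type where
  | eq {m} : Fin m → Fin m → Fml c m
  | adj {m} : Fin m → Fin m → Fml c m
  | col {m} : Fin c → Fin m → Fml c m
  | not {m} : Fml c m → Fml c m
  | or {m} : Fml c m → Fml c m → Fml c m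
  | ex {m} : Fml c (m + 1) → Fml c m

/-- Satisfaction of a first-order formula in a colored graph. -/
def Fml.Sat {c : ℕ} (A : CGraph c) : {m : ℕ} → Fml c m → (Fin m → A.V) → Prop
  | _, .eq i j, v => v i = v j
  | _, .adj i j, v => A.G.Adj (v i) (v j)
  | _, .col i x, v => v x ∈ A.color i
  | _, .not φ, v => ¬ Fml.Sat A φ v
  | _, .or φ ψ, v => Fml.Sat A φ v ∨ Fml.Sat A ψ v
  | _, .ex φ, v => ∃ w : A.V, Fml.Sat A φ (Fin.snoc v w)

/-! ### Simple interpretations and transductions -/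

/-- A simple interpretation of graphs in `c`-colored graphs: a pair of formulas
`(ν(x), η(x,y))` with `η` symmetric and anti-reflexive. -/
structure Interp (c : ℕ) where
  ν : Fml c 1
  η : Fml c 2
  symm : ∀ (A : CGraph c) (u v : A.V), Fml.Sat A η ![u, v] → Fml.Sat A η ![v, u]
  irrefl : ∀ (A : CGraph c) (v : A.V), ¬ Fml.Sat A η ![v, v]

/-- The graph interpreted in a colored graph. -/
def Interp.result {c : ℕ} (I : Interp c) (A : CGraph c) :
    SimpleGraph {v : A.V // Fml.Sat A I.ν ![v]} where
  Adj u v := Fml.Sat A I.η ![u.1, v.1]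
  symm := ⟨fun u v h => I.symm A u.1 v.1 h⟩
  loopless := ⟨fun v h => I.irrefl A v.1 h⟩

/-- The `k`-copy operation on graphs: the copies of a vertex form a clique, and copies
with the same index are adjacent iff the original vertices are. -/
def copyGraph {V : Type} (G : SimpleGraph V) (k : ℕ) : SimpleGraph (V × Fin k) where
  Adj a b := (a.1 = b.1 ∧ a.2 ≠ b.2) ∨ (G.Adj a.1 b.1 ∧ a.2 = b.2)
  symm := by
    constructor
    rintro a b (⟨h1, h2⟩ | ⟨h1, h2⟩)
    · exact Or.inl ⟨h1.symm, h2.symm⟩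
    · exact Or.inr ⟨h1.symm, h2.symm⟩
  loopless := by
    constructor
    rintro a (⟨_, h⟩ | ⟨h, _⟩)
    · exact h rfl
    · exact G.loopless.irrefl _ h

/-- The `k`-copy operation on finite graphs. -/
def FGraph.copy (G : FGraph) (k : ℕ) : FGraph where
  V := G.V × Fin k
  G := copyGraph G.G k

/-- A transduction: a composition `I ∘ Γ_𝒰 ∘ C_k` of a copy operation, a coloring
operation and a simple interpretation. -/
structure Transduction where
  k : ℕ
  kpos : 0 < k
  c : ℕ
  I : Interp c

/-- The colored graph obtained from `C_k(G)` by a choice of coloring. -/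
def Transduction.copyCGraph (T : Transduction) (G : FGraph)
    (color : Fin T.c → Set (G.V × Fin T.k)) : CGraph T.c where
  V := G.V × Fin T.k
  G := copyGraph G.G T.k
  color := color

/-- `H ∈ T(G)` (up to isomorphism). -/
def Transduction.mem (T : Transduction) (G H : FGraph) : Prop :=
  ∃ color : Fin T.c → Set (G.V × Fin T.k),
    Nonempty (H.G ≃g T.I.result (T.copyCGraph G color))

/-- The image `T(𝒟)` of a class of graphs under a transduction. -/
def TImage (T : Transduction) (D : Set FGraph) : Set FGraph :=
  {H | ∃ G ∈ D, T.mem G H}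

/-- `𝒞 ⊑_FO 𝒟` : `𝒞` is a first-order transduction of `𝒟`. -/
def SqFO (C D : Set FGraph) : Prop := ∃ T : Transduction, C ⊆ TImage T D

/-- `𝒞 ⊑°_FO 𝒟` : `𝒞` is a non-copying first-order transduction of `𝒟`. -/
def SqFOnc (C D : Set FGraph) : Prop := ∃ T : Transduction, T.k = 1 ∧ C ⊆ TImage T D

/-- `𝒞 ≡_FO 𝒟`. -/
def EquivFO (C D : Set FGraph) : Prop := SqFO C D ∧ SqFO D C

/-- `T'` subsumes `T` : `T'(G) ⊇ T(G)` for every graph `G`. -/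
def Subsumes (T' T : Transduction) : Prop := ∀ G H : FGraph, T.mem G H → T'.mem G H

/-! ### Perturbations -/

/-- The subset complementation `⊕M`: complement the adjacency between distinct
vertices that both belong to `M`. -/
def scompGraph {V : Type} (G : SimpleGraph V) (M : Set V) : SimpleGraph V where
  Adj u v := u ≠ v ∧ (G.Adj u v ↔ ¬(u ∈ M ∧ v ∈ M))
  symm := by
    constructor
    rintro u v ⟨h1, h2⟩
    refine ⟨h1.symm, ?_, ?_⟩
    · intro h hm
      exact (h2.mp (G.symm.symm _ _ h)) ⟨hm.2, hm.1⟩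
    · intro h
      exact G.symm.symm _ _ (h2.mpr fun hm => h ⟨hm.2, hm.1⟩)
  loopless := ⟨fun v h => h.1 rfl⟩

/-- Applying a finite sequence of subset complementations. -/
def perturbGraph {V : Type} : List (Set V) → SimpleGraph V → SimpleGraph V
  | [], G => G
  | M :: Ms, G => perturbGraph Ms (scompGraph G M)

/-- `H ∈ P(G)` for a perturbation `P` that is the composition of `p` subset
complementations (up to isomorphism). -/
def PerturbMem (p : ℕ) (G H : FGraph) : Prop :=
  ∃ Z : Fin p → Set G.V, Nonempty (H.G ≃g perturbGraph (List.ofFn Z) G.G)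

/-- The image `P(𝒟)` of a class under a perturbation with `p` marks. -/
def PerturbImage (p : ℕ) (D : Set FGraph) : Set FGraph :=
  {H | ∃ G ∈ D, PerturbMem p G H}

/-- `𝒞` is a perturbation of `𝒟`. -/
def IsPerturbationOfClass (C D : Set FGraph) : Prop := ∃ p, C ⊆ PerturbImage p D

/-! ### Locality -/

/-- The ball of radius `r` around a set `S` of vertices. -/
def ballSet {V : Type} (G : SimpleGraph V) (r : ℕ) (S : Set V) : Set V :=
  {v | ∃ u ∈ S, G.Reachable u v ∧ G.dist u v ≤ r}

lemma mem_ballSet_self {V : Type} (G : SimpleGraph V) (r : ℕ) {S : Set V} {v : V}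
    (hv : v ∈ S) : v ∈ ballSet G r S :=
  ⟨v, hv, Reachable.refl v, by rw [SimpleGraph.dist_self]; exact Nat.zero_le r⟩

/-- The colored subgraph induced on a set of vertices. -/
def CGraph.induce {c : ℕ} (A : CGraph c) (S : Set A.V) : CGraph c where
  V := ↥S
  G := A.G.induce S
  color := fun i => {v | (v : A.V) ∈ A.color i}

/-- A formula is `r`-local if its truth only depends on the subgraph induced by the
ball of radius `r` around its free variables. -/
def IsLocalFml {c m : ℕ} (r : ℕ) (φ : Fml c m) : Prop :=
  ∀ (A : CGraph c) (v : Fin m → A.V),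
    Fml.Sat A φ v ↔
      Fml.Sat (A.induce (ballSet A.G r (Set.range v))) φ
        (fun i => ⟨v i, mem_ballSet_self A.G r (Set.mem_range_self i)⟩)

/-- A formula is strongly `r`-local if it is `r`-local and, whenever it holds of a
tuple, the entries of the tuple are pairwise at distance at most `r`. -/
def IsStronglyLocalFml {c m : ℕ} (r : ℕ) (φ : Fml c m) : Prop :=
  IsLocalFml r φ ∧
    ∀ (A : CGraph c) (v : Fin m → A.V), Fml.Sat A φ v →
      ∀ i j : Fin m, A.G.Reachable (v i) (v j) ∧ A.G.dist (v i) (v j) ≤ r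

/-- An immersive transduction: non-copying, with strongly local formulas. -/
def Transduction.Immersive (T : Transduction) : Prop :=
  T.k = 1 ∧ ∃ r : ℕ, IsStronglyLocalFml r T.I.ν ∧ IsStronglyLocalFml r T.I.η

/-! ### Graph classes -/

/-- A set of graphs closed under isomorphism. -/
def IsoClosed (C : Set FGraph) : Prop :=
  ∀ G H : FGraph, Nonempty (G.G ≃g H.G) → G ∈ C → H ∈ C

/-- `H` is (isomorphic to) an induced subgraph of `G`. -/
def IsInducedSubgraphOf (H G : FGraph) : Prop :=
  ∃ f : H.V → G.V, Function.Injective f ∧ ∀ u v, H.G.Adj u v ↔ G.G.Adj (f u) (f v)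

/-- A hereditary class: closed under induced subgraphs. -/
def HereditaryClass (C : Set FGraph) : Prop :=
  ∀ G ∈ C, ∀ H : FGraph, IsInducedSubgraphOf H G → H ∈ C

/-- `H` is (isomorphic to) a subgraph of `G`. -/
def IsSubgraphOf (H G : FGraph) : Prop :=
  ∃ f : H.V → G.V, Function.Injective f ∧ ∀ u v, H.G.Adj u v → G.G.Adj (f u) (f v)

/-- The monotone closure of a class: all subgraphs of its members. -/
def monotoneClosure (C : Set FGraph) : Set FGraph :=
  {H | ∃ G ∈ C, IsSubgraphOf H G}

/-- `G` contains `K_{t,t}` as a subgraph. -/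
def HasKtt {V : Type} (G : SimpleGraph V) (t : ℕ) : Prop :=
  ∃ a b : Fin t → V, Function.Injective a ∧ Function.Injective b ∧
    (∀ i j, a i ≠ b j) ∧ ∀ i j, G.Adj (a i) (b j)

/-- A weakly sparse class: some `K_{t,t}` is a subgraph of no member. -/
def WeaklySparse (C : Set FGraph) : Prop := ∃ t : ℕ, ∀ G ∈ C, ¬ HasKtt G.G t

/-- Disjoint union of two graphs. -/
def sumGraph {V W : Type} (G : SimpleGraph V) (H : SimpleGraph W) : SimpleGraph (V ⊕ W) where
  Adj a b := match a, b with
    | .inl u, .inl v => G.Adj u v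
    | .inr u, .inr v => H.Adj u v
    | _, _ => False
  symm := by
    constructor
    rintro (u | u) (v | v) h
    · exact G.symm.symm _ _ h
    · exact h.elim
    · exact h.elim
    · exact H.symm.symm _ _ h
  loopless := by
    constructor
    rintro (v | v) h
    · exact G.loopless.irrefl _ h
    · exact H.loopless.irrefl _ h

/-- Disjoint union of finite graphs. -/
def FGraph.disjUnion (G H : FGraph) : FGraph where
  V := G.V ⊕ H.V
  G := sumGraph G.G H.G

/-- An addable class: closed under disjoint unions. -/
def Addable (C : Set FGraph) : Prop :=
  ∀ G ∈ C, ∀ H ∈ C, FGraph.disjUnion G H ∈ C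

/-- The degree of a vertex. -/
noncomputable def degCard (G : FGraph) (v : G.V) : ℕ := Nat.card {u : G.V // G.G.Adj v u}

/-- A class with bounded maximum degree. -/
def BddDegree (C : Set FGraph) : Prop := ∃ D : ℕ, ∀ G ∈ C, ∀ v : G.V, degCard G v ≤ D
/-! ### Further graph constructions and parameters -/

/-- Auxiliary instance. -/
instance {α : Type} [Finite α] : Finite (Option α) :=
  Finite.of_equiv _ (Equiv.optionEquivSumPUnit.{0,0} α).symm

/-- Adding an apex vertex adjacent to all vertices. -/
def apexGraph {V : Type} (G : SimpleGraph V) : SimpleGraph (Option V) where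
  Adj a b := match a, b with
    | none, none => False
    | none, some _ => True
    | some _, none => True
    | some u, some v => G.Adj u v
  symm := by
    constructor
    rintro (_ | u) (_ | v) h
    · exact h.elim
    · trivial
    · trivial
    · exact G.symm.symm _ _ h
  loopless := by
    constructor
    rintro (_ | v) h
    · exact h.elim
    · exact G.loopless.irrefl _ h

/-- The class `𝒞 ∨ K₁` of graphs of `𝒞` with an added apex. -/
def JoinK1 (C : Set FGraph) : Set FGraph :=
  {H | ∃ G ∈ C, Nonempty (H.G ≃g apexGraph G.G)}

/-- The ball of radius `r` around a vertex, as a finite graph. -/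
def ballFGraph (G : FGraph) (r : ℕ) (v : G.V) : FGraph where
  V := ↥(ballSet G.G r {v})
  G := G.G.induce (ballSet G.G r {v})

/-- The class `𝓛_r(ℱ)` of all balls of radius `r` of graphs of `ℱ`. -/
def LocClass (r : ℕ) (F : Set FGraph) : Set FGraph :=
  {H | ∃ G ∈ F, ∃ v : G.V, Nonempty (H.G ≃g (ballFGraph G r v).G)}

/-- Adding a pendant vertex adjacent only to `v`. -/
def pendantGraph {V : Type} (G : SimpleGraph V) (v : V) : SimpleGraph (Option V) where
  Adj a b := match a, b with
    | none, none => False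
    | none, some w => w = v
    | some u, none => u = v
    | some u, some w => G.Adj u w
  symm := by
    constructor
    rintro (_ | u) (_ | w) h
    · exact h.elim
    · exact h
    · exact h
    · exact G.symm.symm _ _ h
  loopless := by
    constructor
    rintro (_ | w) h
    · exact h.elim
    · exact G.loopless.irrefl _ h

/-- The finite graph obtained by adding a pendant vertex at `v`. -/
def FGraph.addPendant (G : FGraph) (v : G.V) : FGraph where
  V := Option G.V
  G := pendantGraph G.G v

/-- `G` is obtained from `H` by adding at most `h` vertices, joined arbitrarily. -/
def NearlyOf (h : ℕ) (G H : FGraph) : Prop :=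
  ∃ f : H.V → G.V, Function.Injective f ∧
    (∀ u v, H.G.Adj u v ↔ G.G.Adj (f u) (f v)) ∧
    Nat.card {v : G.V // v ∉ Set.range f} ≤ h

/-- The class `𝒞` is nearly `𝒟`. -/
def Nearly (C D : Set FGraph) : Prop :=
  ∃ h : ℕ, ∀ G ∈ C, ∃ H ∈ D, NearlyOf h G H

/-- The class `ℰ` of all edgeless graphs. -/
def EdgelessClass : Set FGraph := {G | ∀ u v : G.V, ¬ G.G.Adj u v}

/-- All members of the class have connected components of bounded size. -/
def BddComponents (D : Set FGraph) : Prop :=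
  ∃ n : ℕ, ∀ G ∈ D, ∀ v : G.V, Nat.card {u : G.V // G.G.Reachable v u} ≤ n

/-- The class of all cubic (3-regular) graphs. -/
def CubicClass : Set FGraph := {G | ∀ v : G.V, degCard G v = 3}

/-- The class `𝒫` of all paths. -/
def PathClass : Set FGraph :=
  {G | ∃ n : ℕ, Nonempty (G.G ≃g SimpleGraph.pathGraph n)}

/-- The `ℓ`-th power of a graph: two vertices are adjacent iff their distance
is between `1` and `ℓ`. -/
def powGraph {V : Type} (G : SimpleGraph V) (ℓ : ℕ) : SimpleGraph V where
  Adj u v := u ≠ v ∧ G.Reachable u v ∧ G.dist u v ≤ ℓ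
  symm := by
    constructor
    rintro u v ⟨h1, h2, h3⟩
    exact ⟨h1.symm, h2.symm, by rwa [SimpleGraph.dist_comm]⟩
  loopless := ⟨fun v h => h.1 rfl⟩

/-- The bandwidth of `G` is at most `ℓ` : `G` is a subgraph of the `ℓ`-th power
of a path. -/
def BandwidthLE (G : FGraph) (ℓ : ℕ) : Prop :=
  ∃ n : ℕ, ∃ f : G.V → Fin n, Function.Injective f ∧
    ∀ u v, G.G.Adj u v → (powGraph (SimpleGraph.pathGraph n) ℓ).Adj (f u) (f v)

/-- A class with bounded bandwidth. -/
def BddBandwidth (D : Set FGraph) : Prop := ∃ ℓ : ℕ, ∀ G ∈ D, BandwidthLE G ℓ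

/-- The class of all cubic trees: trees all of whose vertices have degree 3 or 1. -/
def CubicTreeClass : Set FGraph :=
  {G | G.G.IsTree ∧ ∀ v : G.V, degCard G v = 3 ∨ degCard G v = 1}

/-- `H` contains a clique on `s` vertices. -/
def HasCliqueN {V : Type} (H : SimpleGraph V) (s : ℕ) : Prop :=
  ∃ f : Fin s → V, Function.Injective f ∧ ∀ i j, i ≠ j → H.Adj (f i) (f j)

/-- A chordal graph: no induced cycle of length at least 4. -/
def IsChordal {V : Type} (H : SimpleGraph V) : Prop :=
  ∀ n : ℕ, 4 ≤ n → ¬ ∃ f : Fin n → V, Function.Injective f ∧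
    ∀ i j, (SimpleGraph.cycleGraph n).Adj i j ↔ H.Adj (f i) (f j)

/-- `tw(G) ≤ n` : `G` is a subgraph of a chordal graph with clique number at most `n+1`. -/
def TreewidthLE (G : FGraph) (n : ℕ) : Prop :=
  ∃ H : SimpleGraph G.V, IsChordal H ∧ G.G ≤ H ∧ ¬ HasCliqueN H (n + 2)

/-- A class with bounded treewidth. -/
def BddTreewidth (D : Set FGraph) : Prop := ∃ n : ℕ, ∀ G ∈ D, TreewidthLE G n

/-- An interval graph: the intersection graph of a family of real intervals. -/
def IsIntervalGraph {V : Type} (H : SimpleGraph V) : Prop :=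
  ∃ l r : V → ℝ, (∀ v, l v ≤ r v) ∧
    ∀ u v, u ≠ v → (H.Adj u v ↔ (l u ≤ r v ∧ l v ≤ r u))

/-- `pw(G) ≤ n` : `G` is a subgraph of an interval graph with clique number at
most `n+1`. -/
def PathwidthLE (G : FGraph) (n : ℕ) : Prop :=
  ∃ H : SimpleGraph G.V, IsIntervalGraph H ∧ G.G ≤ H ∧ ¬ HasCliqueN H (n + 2)

/-- The class `𝒫𝒲_n` of all graphs of pathwidth at most `n`. -/
def PWClass (n : ℕ) : Set FGraph := {G | PathwidthLE G n}

/-- `G` is a forest of depth at most `n` : it is acyclic and roots may be chosen,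
one in each connected component, such that every vertex is at distance at most
`n - 1` from the root of its component. -/
def ForestDepthLE (n : ℕ) (G : FGraph) : Prop :=
  G.G.IsAcyclic ∧ ∃ ρ : G.V → G.V,
    (∀ v, G.G.Reachable (ρ v) v ∧ G.G.dist (ρ v) v ≤ n - 1) ∧
    ∀ u v, G.G.Reachable u v → ρ u = ρ v

/-- The class `𝒯_n` of forests of depth at most `n`. -/
def TreeDepthClass (n : ℕ) : Set FGraph := {G | ForestDepthLE n G}

/-- A star forest: an acyclic graph with no path on four distinct vertices. -/
def IsStarForest (G : FGraph) : Prop :=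
  G.G.IsAcyclic ∧ ∀ a b c d : G.V, G.G.Adj a b → G.G.Adj b c → G.G.Adj c d →
    a = c ∨ b = d ∨ a = d

/-- The class `𝒯₂` of all star forests. -/
def StarForestClass : Set FGraph := {G | IsStarForest G}

/-- `H` is a depth-`r` shallow minor of `G` : it is obtained by contracting
pairwise disjoint connected subgraphs of radius at most `r` and deleting
vertices and edges. -/
def IsShallowMinor (r : ℕ) (H G : FGraph) : Prop :=
  ∃ φ : H.V → Set G.V,
    (∀ v, (φ v).Nonempty) ∧
    (∀ u v, u ≠ v → Disjoint (φ u) (φ v)) ∧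
    (∀ v : H.V, ∃ c : ↥(φ v), ∀ u : ↥(φ v),
      (G.G.induce (φ v)).Reachable c u ∧ (G.G.induce (φ v)).dist c u ≤ r) ∧
    (∀ u v : H.V, H.G.Adj u v → ∃ a ∈ φ u, ∃ b ∈ φ v, G.G.Adj a b)

/-- The average degree of `H` is at most `d`. -/
def AvgDegLE (H : FGraph) (d : ℕ) : Prop :=
  2 * Nat.card H.G.edgeSet ≤ d * Nat.card H.V

/-- A class of bounded expansion: for some `f : ℕ → ℕ`, every depth-`r` shallow
minor of a member has average degree at most `f r`. -/
def BoundedExpansion (C : Set FGraph) : Prop :=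
  ∃ f : ℕ → ℕ, ∀ r : ℕ, ∀ G ∈ C, ∀ H : FGraph, IsShallowMinor r H G → AvgDegLE H (f r)

/-- A proper coloring `f` of `G` with `n` colors is a star coloring if no path on
four vertices receives only two colors. -/
def IsStarColoring {V : Type} (G : SimpleGraph V) (n : ℕ) (f : V → Fin n) : Prop :=
  (∀ u v, G.Adj u v → f u ≠ f v) ∧
  ∀ a b c d, G.Adj a b → G.Adj b c → G.Adj c d → a ≠ c → b ≠ d → a ≠ d →
    ¬ (f a = f c ∧ f b = f d)

/-- A class with bounded star chromatic number. -/
def BddStarChrom (C : Set FGraph) : Prop :=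
  ∃ n : ℕ, ∀ G ∈ C, ∃ f : G.V → Fin n, IsStarColoring G.G n f

/-!
Each complementation `⊕Z` toggles the pair `uv` exactly when both endpoints lie in `Z`, so after
`⊕Z₁ ⋯ ⊕Z_k` the pair is flipped iff it lies in an odd number of the `Z_i`, i.e. iff
`⟨σ u, σ v⟩ = 1` over `𝔽₂` for `σ w` the characteristic vector of `w`. Conversely every
`σ : V → 𝔽₂^k` is such a characteristic vector map, for `Z_i = {w | σ w i = 1}`.
-/

section Perturbation

variable {V : Type}

lemma scompGraph_adj {G : SimpleGraph V} {M : Set V} {u v : V} :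
    (scompGraph G M).Adj u v ↔ u ≠ v ∧ (G.Adj u v ↔ ¬(u ∈ M ∧ v ∈ M)) :=
  Iff.rfl

lemma ZMod.two_add_ne_one_iff (x y : ZMod 2) : x + y ≠ 1 ↔ (x ≠ 1 ↔ y ≠ 1) := by
  revert x y
  decide

lemma indicator_mul_indicator_ne_one_iff (M : Set V) (u v : V) :
    M.indicator 1 u * M.indicator 1 v ≠ (1 : ZMod 2) ↔ ¬(u ∈ M ∧ v ∈ M) := by
  by_cases hu : u ∈ M <;> by_cases hv : v ∈ M <;> simp [hu, hv]

lemma indicator_setOf_eq_one (f : V → ZMod 2) : {w | f w = 1}.indicator 1 = f := by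
  have ne_one : ∀ x : ZMod 2, x ≠ 1 → x = 0 := by decide
  funext w
  by_cases hw : f w = 1
  · simp [hw]
  · simp [ne_one _ hw]

lemma perturbGraph_adj (L : List (Set V)) (G : SimpleGraph V) (u v : V) :
    (perturbGraph L G).Adj u v ↔ u ≠ v ∧
      (G.Adj u v ↔ (L.map fun M => M.indicator 1 u * M.indicator 1 v).sum ≠ (1 : ZMod 2)) := by
  induction L generalizing G with
  | nil =>
    rw [perturbGraph, List.map_nil, List.sum_nil, iff_true_right zero_ne_one]
    exact (and_iff_right_of_imp Adj.ne).symm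
  | cons M Ms ih =>
    rw [perturbGraph, ih, List.map_cons, List.sum_cons, ZMod.two_add_ne_one_iff,
      indicator_mul_indicator_ne_one_iff, ← iff_assoc]
    refine and_congr_right fun hne => ?_
    rw [scompGraph_adj, and_iff_right hne]

lemma perturbGraph_ofFn_adj {k : ℕ} (Z : Fin k → Set V) (G : SimpleGraph V) (u v : V) :
    (perturbGraph (List.ofFn Z) G).Adj u v ↔ u ≠ v ∧
      (G.Adj u v ↔ ∑ i, (Z i).indicator 1 u * (Z i).indicator 1 v ≠ (1 : ZMod 2)) := by
  rw [perturbGraph_adj, List.map_ofFn, List.sum_ofFn]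
  rfl

end Perturbation

theorem perturbation_characterization_general {V : Type} (k : ℕ) (G H : SimpleGraph V) :
    (∃ Z : Fin k → Set V, H = perturbGraph (List.ofFn Z) G) ↔
    (∃ σ : V → (Fin k → ZMod 2),
      ∀ u v : V, H.Adj u v ↔
        (u ≠ v ∧ (G.Adj u v ↔ (∑ i : Fin k, σ u i * σ v i) ≠ 1))) := by
  constructor
  · rintro ⟨Z, rfl⟩
    exact ⟨fun w i => (Z i).indicator 1 w, perturbGraph_ofFn_adj Z G⟩
  · rintro ⟨σ, hσ⟩
    refine ⟨fun i => {w | σ w i = 1}, ?_⟩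
    ext u v
    rw [hσ, perturbGraph_ofFn_adj]
    simp only [indicator_setOf_eq_one (σ · _)]

theorem perturbation_characterization {V : Type} [Finite V] (k : ℕ) (G H : SimpleGraph V) :
    (∃ Z : Fin k → Set V, H = perturbGraph (List.ofFn Z) G) ↔
    (∃ σ : V → (Fin k → ZMod 2),
      ∀ u v : V, H.Adj u v ↔
        (u ≠ v ∧ (G.Adj u v ↔ (∑ i : Fin k, σ u i * σ v i) ≠ 1))) :=
  perturbation_characterization_general k G H
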